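/- arXiv:1404.2537 — 3 statements merged into one kernel-verified Lean document; each statement's English description precedes it below -/
import Mathlib

section
/- The quantity d_{T2} := 2·L_{T2}·|Ψ_{T22} \ Ψ_{T12}| + 2·max(0, min(L_{T2}·|Ψ_{T22} ∩ Ψ_{T12}|, (L_{T2}·|Ψ_{T12}| − L_{R1}·|Ψ_{R12}|)⁺ + L_{R1}·|Ψ_{R12} \ Ψ_{R11}|)) satisfies the identity d_{T2} = min(2·L_{T2}·|Ψ_{T22}|, d_sum − 2·L_{R1}·|Ψ_{R11}|). -/
/-! Write `c = L_R1 |Ψ_R11 ∩ Ψ_R12|` and `e = L_R1 |Ψ_R12 \ Ψ_R11|`, so that `L_R1 |Ψ_R12| = e + c`.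
Additivity of the measure on the splittings of `Ψ_T22`, `Ψ_R11`, `Ψ_R12` reduces the identity to
`max T R - c = (T - R)⁺ + e ≥ 0` for `T = L_T2 |Ψ_T12|`, `R = L_R1 |Ψ_R12|`: the outer `max 0` in
`d_T2` is then inactive, and both sides equal `2 L_T2 |Ψ_T22 \ Ψ_T12|` plus twice
`min (L_T2 |Ψ_T22 ∩ Ψ_T12|) (max T R - c)`. -/

open MeasureTheory Set

/-- Real-valued Lebesgue measure of a set of reals. -/
noncomputable def μr (S : Set ℝ) : ℝ := (volume S).toReal

lemma μr_nonneg (s : Set ℝ) : 0 ≤ μr s := ENNReal.toReal_nonneg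

lemma μr_sdiff_add_inter {s t : Set ℝ} (hs : volume s ≠ ⊤) (ht : MeasurableSet t) :
    μr (s \ t) + μr (s ∩ t) = μr s :=
  measureReal_sdiff_add_inter ht hs

lemma volume_ne_top_of_subset_Icc {s : Set ℝ} {a b : ℝ} (hs : s ⊆ Icc a b) : volume s ≠ ⊤ :=
  measure_ne_top_of_subset hs measure_Icc_lt_top.ne

lemma max_sub_eq_max_sub_zero_add {T R c e : ℝ} (hR : R = e + c) :
    max T R - c = max (T - R) 0 + e := by
  rw [← max_sub_sub_right, ← max_add_add_right, hR]
  congr 1 <;> ring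

lemma max_zero_min_max_sub_zero_add {b T R c e : ℝ} (hb : 0 ≤ b) (he : 0 ≤ e)
    (hR : R = e + c) :
    max 0 (min b (max (T - R) 0 + e)) = min b (max T R - c) := by
  rw [max_sub_eq_max_sub_zero_add hR, max_eq_right (le_min hb (by positivity))]

lemma add_two_mul_min (a x y : ℝ) :
    a + 2 * min x y = min (a + 2 * x) (a + 2 * y) := by
  rw [mul_min_of_nonneg _ _ zero_le_two, min_add_add_left]

theorem dT2_identity_general
    (L_R1 L_T2 : ℝ)
    (hLR1 : 0 ≤ L_R1) (hLT2 : 0 ≤ L_T2)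
    (ΨT12 ΨT22 ΨR11 ΨR12 : Set ℝ)
    (hmT12 : MeasurableSet ΨT12)
    (hmR11 : MeasurableSet ΨR11)
    (hmR12 : MeasurableSet ΨR12)
    (hsT22 : ΨT22 ⊆ Icc (-1) 1) (hsR11 : ΨR11 ⊆ Icc (-1) 1)
    (hsR12 : ΨR12 ⊆ Icc (-1) 1)
    (dsum dT2 : ℝ)
    (hdsum : dsum = 2 * L_T2 * μr (ΨT22 \ ΨT12) + 2 * L_R1 * μr (ΨR11 \ ΨR12)
        + 2 * max (L_T2 * μr ΨT12) (L_R1 * μr ΨR12))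
    (hdT2 : dT2 = 2 * L_T2 * μr (ΨT22 \ ΨT12)
        + 2 * max 0 (min (L_T2 * μr (ΨT22 ∩ ΨT12))
            (max (L_T2 * μr ΨT12 - L_R1 * μr ΨR12) 0 + L_R1 * μr (ΨR12 \ ΨR11)))) :
    dT2 = min (2 * L_T2 * μr ΨT22) (dsum - 2 * L_R1 * μr ΨR11) := by
  have hT22 := μr_sdiff_add_inter (volume_ne_top_of_subset_Icc hsT22) hmT12
  have hR11 := μr_sdiff_add_inter (volume_ne_top_of_subset_Icc hsR11) hmR12
  have hR12 := μr_sdiff_add_inter (volume_ne_top_of_subset_Icc hsR12) hmR11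
  rw [inter_comm] at hR12
  have hsplit : L_R1 * μr ΨR12 = L_R1 * μr (ΨR12 \ ΨR11) + L_R1 * μr (ΨR11 ∩ ΨR12) := by
    rw [← hR12, mul_add]
  rw [hdT2, max_zero_min_max_sub_zero_add (mul_nonneg hLT2 (μr_nonneg _))
    (mul_nonneg hLR1 (μr_nonneg _)) hsplit,
    add_two_mul_min, hdsum, ← hT22, ← hR11]
  congr 1 <;> ring

theorem dT2_identity
    (L_T1 L_R1 L_T2 L_R2 : ℝ)
    (hLT1 : 0 ≤ L_T1) (hLR1 : 0 ≤ L_R1) (hLT2 : 0 ≤ L_T2) (hLR2 : 0 ≤ L_R2)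
    (ΨT11 ΨT12 ΨT22 ΨR11 ΨR12 ΨR22 : Set ℝ)
    (hmT11 : MeasurableSet ΨT11) (hmT12 : MeasurableSet ΨT12)
    (hmT22 : MeasurableSet ΨT22) (hmR11 : MeasurableSet ΨR11)
    (hmR12 : MeasurableSet ΨR12) (hmR22 : MeasurableSet ΨR22)
    (hsT11 : ΨT11 ⊆ Icc (-1) 1) (hsT12 : ΨT12 ⊆ Icc (-1) 1)
    (hsT22 : ΨT22 ⊆ Icc (-1) 1) (hsR11 : ΨR11 ⊆ Icc (-1) 1)
    (hsR12 : ΨR12 ⊆ Icc (-1) 1) (hsR22 : ΨR22 ⊆ Icc (-1) 1)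
    (dsum dT2 : ℝ)
    (hdsum : dsum = 2 * L_T2 * μr (ΨT22 \ ΨT12) + 2 * L_R1 * μr (ΨR11 \ ΨR12)
        + 2 * max (L_T2 * μr ΨT12) (L_R1 * μr ΨR12))
    (hdT2 : dT2 = 2 * L_T2 * μr (ΨT22 \ ΨT12)
        + 2 * max 0 (min (L_T2 * μr (ΨT22 ∩ ΨT12))
            (max (L_T2 * μr ΨT12 - L_R1 * μr ΨR12) 0 + L_R1 * μr (ΨR12 \ ΨR11)))) :
    dT2 = min (2 * L_T2 * μr ΨT22) (dsum - 2 * L_R1 * μr ΨR11) :=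
  dT2_identity_general L_R1 L_T2 hLR1 hLT2 ΨT12 ΨT22 ΨR11 ΨR12 hmT12 hmR11 hmR12 hsT22 hsR11 hsR12
    dsum dT2 hdsum hdT2
end

section
/- (Corner point of the full-duplex degree-of-freedom region, Lemma 2, first corner.) Define d2' casewise: d2' = min(d_{T2}, 2·L_{R2}·|Ψ_{R22}|) if L_{T1}·|Ψ_{T11}| ≥ L_{R1}·|Ψ_{R11}|, and d2' = min(δ_{T2}, 2·L_{R2}·|Ψ_{R22}|) otherwise. Then d2' = min(d2max, d_sum − d1max). In particular, if d_sum ≤ d1max + d2max then the degree-of-freedom pair (d1', d2') with d1' = d1max equals the corner point (d1max, d_sum − d1max). -/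
open MeasureTheory Set

/-! Writing `u + c` for `L_T2 |Ψ_T22|` split along `Ψ_T12`, `v + j` for `L_R1 |Ψ_R11|` split along
`Ψ_R12`, `B = L_T2 |Ψ_T12|`, `Q = L_R1 |Ψ_R12|` and `T = L_T1 |Ψ_T11|`, both sides become `2u + 2 min (c, Y)` capped
by `2 L_R2 |Ψ_R22|`, where `Y = max B Q - j` when `d1max = 2(v + j)` and `Y = v + max B Q - T`
when `d1max = 2T`. The clipping terms in `d_T2` and `δ_T2` are exactly what makes them
reduce to this form, using only `0 ≤ c ≤ B` and `j ≤ Q`. -/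

lemma max_zero_min_max_sub_add_sub {c B Q j : ℝ} (hc : 0 ≤ c) (hjQ : j ≤ Q) :
    max 0 (min c (max (B - Q) 0 + (Q - j))) = min c (max B Q - j) := by
  have hY : max (B - Q) 0 + (Q - j) = max B Q - j := by
    simp only [max_def]; split_ifs <;> linarith
  rw [hY, max_eq_right (le_min hc (by linarith [le_max_right B Q]))]

lemma min_sub_max_sub_add_max_sub {c B Q v T : ℝ} (hcB : c ≤ B) :
    min c (B - max (T - (v + max (Q - B) 0)) 0) = min c (v + max B Q - T) := by
  have hY : B - max (T - (v + max (Q - B) 0)) 0 = min B (v + max B Q - T) := by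
    simp only [max_def, min_def]; split_ifs <;> linarith
  rw [hY, ← min_assoc, min_eq_left hcB]

lemma min_two_mul_add_min (u c Y R : ℝ) :
    min (2 * u + 2 * min c Y) (2 * R) = min (2 * min (u + c) R) (2 * u + 2 * Y) := by
  simp only [min_def]; split_ifs <;> linarith

theorem corner_identity {u c B v j Q T R : ℝ} (hc : 0 ≤ c) (hcB : c ≤ B) (hjQ : j ≤ Q) :
    (if v + j ≤ T
      then min (2 * u + 2 * max 0 (min c (max (B - Q) 0 + (Q - j)))) (2 * R)
      else min (2 * u + 2 * min c (B - max (T - (v + max (Q - B) 0)) 0)) (2 * R))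
    = min (2 * min (u + c) R) (2 * u + 2 * v + 2 * max B Q - 2 * min T (v + j)) := by
  split_ifs with h
  · rw [max_zero_min_max_sub_add_sub hc hjQ, min_two_mul_add_min, min_eq_right h]
    ring_nf
  · rw [min_sub_max_sub_add_max_sub hcB, min_two_mul_add_min, min_eq_left (not_le.1 h).le]
    ring_nf

theorem corner_point_one_general
    (L_T1 L_R1 L_T2 L_R2 : ℝ)
    (hLR1 : 0 ≤ L_R1) (hLT2 : 0 ≤ L_T2)
    (ΨT11 ΨT12 ΨT22 ΨR11 ΨR12 ΨR22 : Set ℝ)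
    (hmT12 : MeasurableSet ΨT12)
    (hmR11 : MeasurableSet ΨR11)
    (hmR12 : MeasurableSet ΨR12)
    (hsT12 : ΨT12 ⊆ Icc (-1) 1)
    (hsT22 : ΨT22 ⊆ Icc (-1) 1) (hsR11 : ΨR11 ⊆ Icc (-1) 1)
    (hsR12 : ΨR12 ⊆ Icc (-1) 1)
    (d1max d2max dsum dT2 δT2 d1' d2' : ℝ)
    (hd1max : d1max = 2 * min (L_T1 * μr ΨT11) (L_R1 * μr ΨR11))
    (hd2max : d2max = 2 * min (L_T2 * μr ΨT22) (L_R2 * μr ΨR22))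
    (hdsum : dsum = 2 * L_T2 * μr (ΨT22 \ ΨT12) + 2 * L_R1 * μr (ΨR11 \ ΨR12)
        + 2 * max (L_T2 * μr ΨT12) (L_R1 * μr ΨR12))
    (hdT2 : dT2 = 2 * L_T2 * μr (ΨT22 \ ΨT12)
        + 2 * max 0 (min (L_T2 * μr (ΨT22 ∩ ΨT12))
            (max (L_T2 * μr ΨT12 - L_R1 * μr ΨR12) 0 + L_R1 * μr (ΨR12 \ ΨR11))))
    (hδT2 : δT2 = 2 * L_T2 * μr (ΨT22 \ ΨT12)
        + 2 * min (L_T2 * μr (ΨT22 ∩ ΨT12))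
            (L_T2 * μr ΨT12 - max (L_T1 * μr ΨT11
              - (L_R1 * μr (ΨR11 \ ΨR12) + max (L_R1 * μr ΨR12 - L_T2 * μr ΨT12) 0)) 0))
    (hd2' : d2' = if L_R1 * μr ΨR11 ≤ L_T1 * μr ΨT11
        then min dT2 (2 * L_R2 * μr ΨR22)
        else min δT2 (2 * L_R2 * μr ΨR22))
    (hd1' : d1' = d1max)
    :
    d2' = min d2max (dsum - d1max) ∧
      (dsum ≤ d1max + d2max → (d1', d2') = (d1max, dsum - d1max)) := by
  have hfin {s : Set ℝ} (hs : s ⊆ Icc (-1) 1) : volume s ≠ ⊤ :=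
    measure_ne_top_of_subset hs measure_Icc_lt_top.ne
  have hT22 : L_T2 * μr ΨT22 = L_T2 * μr (ΨT22 \ ΨT12) + L_T2 * μr (ΨT22 ∩ ΨT12) := by
    rw [← mul_add]; exact congrArg _ (measureReal_sdiff_add_inter hmT12 (hfin hsT22)).symm
  have hR11 : L_R1 * μr ΨR11 = L_R1 * μr (ΨR11 \ ΨR12) + L_R1 * μr (ΨR11 ∩ ΨR12) := by
    rw [← mul_add]; exact congrArg _ (measureReal_sdiff_add_inter hmR12 (hfin hsR11)).symm
  have hR12 : L_R1 * μr (ΨR12 \ ΨR11) = L_R1 * μr ΨR12 - L_R1 * μr (ΨR11 ∩ ΨR12) := by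
    rw [← mul_sub, inter_comm]
    exact congrArg _ (eq_sub_of_add_eq (measureReal_sdiff_add_inter hmR11 (hfin hsR12)))
  have hc : 0 ≤ L_T2 * μr (ΨT22 ∩ ΨT12) := mul_nonneg hLT2 ENNReal.toReal_nonneg
  have hcB : L_T2 * μr (ΨT22 ∩ ΨT12) ≤ L_T2 * μr ΨT12 :=
    mul_le_mul_of_nonneg_left (measureReal_mono inter_subset_right (hfin hsT12)) hLT2
  have hjQ : L_R1 * μr (ΨR11 ∩ ΨR12) ≤ L_R1 * μr ΨR12 :=
    mul_le_mul_of_nonneg_left (measureReal_mono inter_subset_right (hfin hsR12)) hLR1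
  have hd2 : d2' = min d2max (dsum - d1max) := by
    rw [hd2', hdT2, hδT2, hd2max, hdsum, hd1max, hR11, hT22, hR12]
    simp only [mul_assoc]
    exact corner_identity hc hcB hjQ
  refine ⟨hd2, fun hle => ?_⟩
  rw [hd1', hd2, min_eq_right (by linarith)]

theorem corner_point_one
    (L_T1 L_R1 L_T2 L_R2 : ℝ)
    (hLT1 : 0 ≤ L_T1) (hLR1 : 0 ≤ L_R1) (hLT2 : 0 ≤ L_T2) (hLR2 : 0 ≤ L_R2)
    (ΨT11 ΨT12 ΨT22 ΨR11 ΨR12 ΨR22 : Set ℝ)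
    (hmT11 : MeasurableSet ΨT11) (hmT12 : MeasurableSet ΨT12)
    (hmT22 : MeasurableSet ΨT22) (hmR11 : MeasurableSet ΨR11)
    (hmR12 : MeasurableSet ΨR12) (hmR22 : MeasurableSet ΨR22)
    (hsT11 : ΨT11 ⊆ Icc (-1) 1) (hsT12 : ΨT12 ⊆ Icc (-1) 1)
    (hsT22 : ΨT22 ⊆ Icc (-1) 1) (hsR11 : ΨR11 ⊆ Icc (-1) 1)
    (hsR12 : ΨR12 ⊆ Icc (-1) 1) (hsR22 : ΨR22 ⊆ Icc (-1) 1)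
    (d1max d2max dsum dT2 δT2 d1' d2' : ℝ)
    (hd1max : d1max = 2 * min (L_T1 * μr ΨT11) (L_R1 * μr ΨR11))
    (hd2max : d2max = 2 * min (L_T2 * μr ΨT22) (L_R2 * μr ΨR22))
    (hdsum : dsum = 2 * L_T2 * μr (ΨT22 \ ΨT12) + 2 * L_R1 * μr (ΨR11 \ ΨR12)
        + 2 * max (L_T2 * μr ΨT12) (L_R1 * μr ΨR12))
    (hdT2 : dT2 = 2 * L_T2 * μr (ΨT22 \ ΨT12)
        + 2 * max 0 (min (L_T2 * μr (ΨT22 ∩ ΨT12))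
            (max (L_T2 * μr ΨT12 - L_R1 * μr ΨR12) 0 + L_R1 * μr (ΨR12 \ ΨR11))))
    (hδT2 : δT2 = 2 * L_T2 * μr (ΨT22 \ ΨT12)
        + 2 * min (L_T2 * μr (ΨT22 ∩ ΨT12))
            (L_T2 * μr ΨT12 - max (L_T1 * μr ΨT11
              - (L_R1 * μr (ΨR11 \ ΨR12) + max (L_R1 * μr ΨR12 - L_T2 * μr ΨT12) 0)) 0))
    (hd2' : d2' = if L_R1 * μr ΨR11 ≤ L_T1 * μr ΨT11
        then min dT2 (2 * L_R2 * μr ΨR22)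
        else min δT2 (2 * L_R2 * μr ΨR22))
    (hd1' : d1' = d1max)
    :
    d2' = min d2max (dsum - d1max) ∧
      (dsum ≤ d1max + d2max → (d1', d2') = (d1max, dsum - d1max)) :=
  corner_point_one_general L_T1 L_R1 L_T2 L_R2 hLR1 hLT2 ΨT11 ΨT12 ΨT22 ΨR11 ΨR12 ΨR22 hmT12 hmR11
    hmR12 hsT12 hsT22 hsR11 hsR12 d1max d2max dsum dT2 δT2 d1' d2' hd1max hd2max hdsum hdT2 hδT2
    hd2' hd1'
end

section
/- (Corner point of the full-duplex degree-of-freedom region, Lemma 2, second corner.) Define d1'' casewise: d1'' = min(2·L_{T1}·|Ψ_{T11}|, d_{R1}) if L_{R2}·|Ψ_{R22}| ≥ L_{T2}·|Ψ_{T22}|, and d1'' = min(2·L_{T1}·|Ψ_{T11}|, δ_{R1}) otherwise. Then d1'' = min(d1max, d_sum − d2max). In particular, if d_sum ≤ d1max + d2max then the degree-of-freedom pair (d1'', d2'') with d2'' = d2max equals the corner point (d_sum − d2max, d2max). -/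
open MeasureTheory Set

/-!
Splitting `Ψ_{R11}` along `Ψ_{R12}` and `Ψ_{T12}`, `Ψ_{T22}` along `Ψ_{T12} ∩ Ψ_{T22}` turns the
claim into an identity between piecewise-linear expressions in eight nonnegative reals. When
`d2max = 2 L_{T2}|Ψ_{T22}|`, the common part `L_{T2}|Ψ_{T12} ∩ Ψ_{T22}|` cancels from
`d_sum − d2max`, leaving exactly the second argument of the inner `min` in `d_{R1}`. Otherwise the
outer truncation in `δ_{R1}` only caps at `L_{R1}|Ψ_{R12}|`, which is invisible next to
`L_{R1}|Ψ_{R11} ∩ Ψ_{R12}| ≤ L_{R1}|Ψ_{R12}|`.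
-/

lemma max_add_sub_eq (a b c : ℝ) : max (a + c) b - c = max (b - (a + c)) 0 + a := by
  rcases le_total (a + c) b with h | h
  · rw [max_eq_right h, max_eq_left (sub_nonneg.mpr h)]; ring
  · rw [max_eq_left h, max_eq_right (sub_nonpos.mpr h)]; ring

lemma min_sub_max_zero_of_le {a b w : ℝ} (h : a ≤ b) : min a (b - max w 0) = min a (b - w) := by
  rcases le_total w 0 with hw | hw
  · rw [max_eq_right hw, sub_zero, min_eq_left h, min_eq_left (by linarith)]
  · rw [max_eq_left hw]

lemma min_two_mul_add_min_s5 (t r x y : ℝ) :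
    min (2 * t) (2 * r + 2 * min x y) = min (2 * min t (r + x)) (2 * r + 2 * y) := by
  rw [← mul_add, ← mul_add, ← mul_min_of_nonneg _ _ zero_le_two, add_min, ← min_assoc,
    mul_min_of_nonneg _ _ zero_le_two]

lemma corner_identity_s5 {t11 r11 rs ri r12 t22 ts t12 tp ti r22 : ℝ}
    (hr11 : r11 = rs + ri) (ht22 : t22 = ts + ti) (ht12 : t12 = tp + ti)
    (hri : 0 ≤ ri) (htp : 0 ≤ tp) (hri12 : ri ≤ r12) :
    (if t22 ≤ r22
      then min (2 * t11) (2 * rs + 2 * max 0 (min ri (max (r12 - t12) 0 + tp)))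
      else min (2 * t11) (2 * rs + 2 * min ri (r12 - max (r22 - (ts + max (t12 - r12) 0)) 0)))
    = min (2 * min t11 r11) (2 * ts + 2 * rs + 2 * max t12 r12 - 2 * min t22 r22) := by
  subst hr11 ht22 ht12
  split_ifs with h
  · have hX : 0 ≤ max (r12 - (tp + ti)) 0 + tp := add_nonneg (le_max_right _ _) htp
    rw [max_eq_right (le_min hri hX), min_two_mul_add_min_s5, min_eq_left h,
      ← max_add_sub_eq tp r12 ti]
    ring_nf
  · rw [min_sub_max_zero_of_le hri12, min_two_mul_add_min_s5,
      min_eq_right (le_of_not_ge h)]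
    congr 1
    rcases le_total (tp + ti) r12 with h' | h'
    · rw [max_eq_right (sub_nonpos.mpr h'), max_eq_right h']; ring
    · rw [max_eq_left (sub_nonneg.mpr h'), max_eq_left h']; ring

lemma mul_μr_eq_sdiff_add_inter (c : ℝ) {s t : Set ℝ} (ht : MeasurableSet t)
    (hs : volume s ≠ ⊤) : c * μr s = c * μr (s \ t) + c * μr (s ∩ t) := by
  rw [← mul_add]
  exact congrArg (c * ·) (measureReal_sdiff_add_inter ht hs).symm

theorem corner_point_two_general
    (L_T1 L_R1 L_T2 L_R2 : ℝ)
    (hLR1 : 0 ≤ L_R1) (hLT2 : 0 ≤ L_T2)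
    (ΨT11 ΨT12 ΨT22 ΨR11 ΨR12 ΨR22 : Set ℝ)
    (hmT12 : MeasurableSet ΨT12) (hmT22 : MeasurableSet ΨT22) (hmR12 : MeasurableSet ΨR12)
    (hsT12 : ΨT12 ⊆ Icc (-1) 1) (hsT22 : ΨT22 ⊆ Icc (-1) 1) (hsR11 : ΨR11 ⊆ Icc (-1) 1)
    (hsR12 : ΨR12 ⊆ Icc (-1) 1)
    (d1max d2max dsum dR1 δR1 d1'' d2'' : ℝ)
    (hd1max : d1max = 2 * min (L_T1 * μr ΨT11) (L_R1 * μr ΨR11))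
    (hd2max : d2max = 2 * min (L_T2 * μr ΨT22) (L_R2 * μr ΨR22))
    (hdsum : dsum = 2 * L_T2 * μr (ΨT22 \ ΨT12) + 2 * L_R1 * μr (ΨR11 \ ΨR12)
        + 2 * max (L_T2 * μr ΨT12) (L_R1 * μr ΨR12))
    (hdR1 : dR1 = 2 * L_R1 * μr (ΨR11 \ ΨR12)
        + 2 * max 0 (min (L_R1 * μr (ΨR11 ∩ ΨR12))
            (max (L_R1 * μr ΨR12 - L_T2 * μr ΨT12) 0 + L_T2 * μr (ΨT12 \ ΨT22))))
    (hδR1 : δR1 = 2 * L_R1 * μr (ΨR11 \ ΨR12)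
        + 2 * min (L_R1 * μr (ΨR11 ∩ ΨR12))
            (L_R1 * μr ΨR12 - max (L_R2 * μr ΨR22
              - (L_T2 * μr (ΨT22 \ ΨT12) + max (L_T2 * μr ΨT12 - L_R1 * μr ΨR12) 0)) 0))
    (hd1'' : d1'' = if L_T2 * μr ΨT22 ≤ L_R2 * μr ΨR22
        then min (2 * L_T1 * μr ΨT11) dR1
        else min (2 * L_T1 * μr ΨT11) δR1)
    (hd2'' : d2'' = d2max)
    :
    d1'' = min d1max (dsum - d2max) ∧
      (dsum ≤ d1max + d2max → (d1'', d2'') = (dsum - d2max, d2max)) := by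
  have hR11 := mul_μr_eq_sdiff_add_inter L_R1 hmR12 (volume_ne_top_of_subset_Icc hsR11)
  have hT22 := mul_μr_eq_sdiff_add_inter L_T2 hmT12 (volume_ne_top_of_subset_Icc hsT22)
  have hT12 := mul_μr_eq_sdiff_add_inter L_T2 hmT22 (volume_ne_top_of_subset_Icc hsT12)
  rw [inter_comm] at hT22
  have hR11R12 : L_R1 * μr (ΨR11 ∩ ΨR12) ≤ L_R1 * μr ΨR12 :=
    mul_le_mul_of_nonneg_left
      (measureReal_mono inter_subset_right (volume_ne_top_of_subset_Icc hsR12)) hLR1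
  have hd1 : d1'' = min d1max (dsum - d2max) := by
    simp only [mul_assoc] at hd1'' hdR1 hδR1 hdsum
    subst hd1'' hdR1 hδR1 hdsum hd1max hd2max
    exact corner_identity_s5 hR11 hT22 hT12 (mul_nonneg hLR1 measureReal_nonneg)
      (mul_nonneg hLT2 measureReal_nonneg) hR11R12
  refine ⟨hd1, fun h => ?_⟩
  rw [hd2'', hd1, min_eq_right (sub_le_iff_le_add.mpr h)]

theorem corner_point_two
    (L_T1 L_R1 L_T2 L_R2 : ℝ)
    (hLT1 : 0 ≤ L_T1) (hLR1 : 0 ≤ L_R1) (hLT2 : 0 ≤ L_T2) (hLR2 : 0 ≤ L_R2)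
    (ΨT11 ΨT12 ΨT22 ΨR11 ΨR12 ΨR22 : Set ℝ)
    (hmT11 : MeasurableSet ΨT11) (hmT12 : MeasurableSet ΨT12)
    (hmT22 : MeasurableSet ΨT22) (hmR11 : MeasurableSet ΨR11)
    (hmR12 : MeasurableSet ΨR12) (hmR22 : MeasurableSet ΨR22)
    (hsT11 : ΨT11 ⊆ Icc (-1) 1) (hsT12 : ΨT12 ⊆ Icc (-1) 1)
    (hsT22 : ΨT22 ⊆ Icc (-1) 1) (hsR11 : ΨR11 ⊆ Icc (-1) 1)
    (hsR12 : ΨR12 ⊆ Icc (-1) 1) (hsR22 : ΨR22 ⊆ Icc (-1) 1)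
    (d1max d2max dsum dR1 δR1 d1'' d2'' : ℝ)
    (hd1max : d1max = 2 * min (L_T1 * μr ΨT11) (L_R1 * μr ΨR11))
    (hd2max : d2max = 2 * min (L_T2 * μr ΨT22) (L_R2 * μr ΨR22))
    (hdsum : dsum = 2 * L_T2 * μr (ΨT22 \ ΨT12) + 2 * L_R1 * μr (ΨR11 \ ΨR12)
        + 2 * max (L_T2 * μr ΨT12) (L_R1 * μr ΨR12))
    (hdR1 : dR1 = 2 * L_R1 * μr (ΨR11 \ ΨR12)
        + 2 * max 0 (min (L_R1 * μr (ΨR11 ∩ ΨR12))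
            (max (L_R1 * μr ΨR12 - L_T2 * μr ΨT12) 0 + L_T2 * μr (ΨT12 \ ΨT22))))
    (hδR1 : δR1 = 2 * L_R1 * μr (ΨR11 \ ΨR12)
        + 2 * min (L_R1 * μr (ΨR11 ∩ ΨR12))
            (L_R1 * μr ΨR12 - max (L_R2 * μr ΨR22
              - (L_T2 * μr (ΨT22 \ ΨT12) + max (L_T2 * μr ΨT12 - L_R1 * μr ΨR12) 0)) 0))
    (hd1'' : d1'' = if L_T2 * μr ΨT22 ≤ L_R2 * μr ΨR22
        then min (2 * L_T1 * μr ΨT11) dR1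
        else min (2 * L_T1 * μr ΨT11) δR1)
    (hd2'' : d2'' = d2max)
    :
    d1'' = min d1max (dsum - d2max) ∧
      (dsum ≤ d1max + d2max → (d1'', d2'') = (dsum - d2max, d2max)) :=
  corner_point_two_general L_T1 L_R1 L_T2 L_R2 hLR1 hLT2 ΨT11 ΨT12 ΨT22 ΨR11 ΨR12 ΨR22 hmT12 hmT22
    hmR12 hsT12 hsT22 hsR11 hsR12 d1max d2max dsum dR1 δR1 d1'' d2'' hd1max hd2max hdsum hdR1 hδR1
    hd1'' hd2''
end
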